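/- arXiv:1809.06633 — 6 statements merged into one kernel-verified Lean document; each statement's English description precedes it below -/
import Mathlib

section
/- Let D_n = n! ∑_{k=0}^n (−1)^k/k! be the number of derangements and A_n = n! ∑_{k=0}^n 1/k! the number of arrangements of an n-element set. If a function P satisfies P(x) ~ ∑_{n=1}^∞ (n−1)!/(log x)^n (x → ∞), then P(e·x) ~ ∑_{n=1}^∞ D_{n−1}/(log x)^n (x → ∞) and P(x/e) ~ ∑_{n=1}^∞ A_{n−1}/(log x)^n (x → ∞). -/
open Real Filter Asymptotics

/-- The number of derangements of an `n`-element set, `D_n = n! ∑_{k=0}^n (-1)^k/k!`. -/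
noncomputable def derangementsReal (n : ℕ) : ℝ :=
  (Nat.factorial n : ℝ) * ∑ k ∈ Finset.range (n + 1), (-1 : ℝ) ^ k / (Nat.factorial k : ℝ)

/-- The number of arrangements of an `n`-element set, `A_n = n! ∑_{k=0}^n 1/k!`. -/
noncomputable def arrangementsReal (n : ℕ) : ℝ :=
  (Nat.factorial n : ℝ) * ∑ k ∈ Finset.range (n + 1), 1 / (Nat.factorial k : ℝ)

/-!
With `L = log x` we have `log (x / e^b) = L - b`, so the hypothesis gives
`P (x / e^b) = ∑_{k<n} k! / (L - b)^(k+1) + o(L^(-n))`. Expanding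
`(L - b)^(-(k+1)) = ∑_i C(k+i, i) b^i / L^(k+1+i) + O(L^(-(n+1)))` and collecting the coefficient
of `L^(-(j+1))` gives `∑_{k+i=j} k! C(k+i, i) b^i = j! ∑_{i≤j} b^i / i!`, which is `D_j` for
`b = -1` (then `x / e^b = e x`) and `A_j` for `b = 1`.
-/

open Finset Nat

lemma isBigO_inv_sub_pow (b : ℝ) (k : ℕ) :
    (fun L : ℝ => ((L - b) ^ k)⁻¹) =O[atTop] fun L => (L ^ k)⁻¹ := by
  have h : (fun L : ℝ => L - b) ~[atTop] fun L => L :=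
    IsEquivalent.refl.sub_isLittleO (isLittleO_const_id_atTop b)
  exact ((h.pow k).inv).isBigO

/-- `multichoose k i = C(k + i - 1, i)` rather than `choose` makes the case `k = 0` uniform: the
expansion of `(L - b)^0` is the single term `1`. -/
noncomputable def invSubPowRemainder (b : ℝ) (k m : ℕ) (L : ℝ) : ℝ :=
  ((L - b) ^ k)⁻¹ - ∑ i ∈ range m, (k.multichoose i : ℝ) * b ^ i / L ^ (k + i)

lemma invSubPowRemainder_zero_succ (b : ℝ) (m : ℕ) : invSubPowRemainder b 0 (m + 1) = 0 := by
  funext L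
  simp [invSubPowRemainder, sum_range_succ']

lemma mul_invSubPowRemainder_succ_succ {b L : ℝ} (hL : L ≠ 0) (hLb : L - b ≠ 0) (k m : ℕ) :
    L * invSubPowRemainder b (k + 1) (m + 1) L
      = invSubPowRemainder b k (m + 1) L + b * invSubPowRemainder b (k + 1) m L := by
  have hpow : L * ((L - b) ^ (k + 1))⁻¹ = ((L - b) ^ k)⁻¹ + b * ((L - b) ^ (k + 1))⁻¹ := by
    field_simp; ring
  have hsum : L * ∑ i ∈ range (m + 1), ((k + 1).multichoose i : ℝ) * b ^ i / L ^ (k + 1 + i)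
      = ∑ i ∈ range (m + 1), (k.multichoose i : ℝ) * b ^ i / L ^ (k + i)
        + b * ∑ i ∈ range m, ((k + 1).multichoose i : ℝ) * b ^ i / L ^ (k + 1 + i) := by
    rw [sum_range_succ' (fun i => ((k + 1).multichoose i : ℝ) * b ^ i / L ^ (k + 1 + i)),
      sum_range_succ' (fun i => (k.multichoose i : ℝ) * b ^ i / L ^ (k + i)), mul_add, mul_sum,
      mul_sum]
    have htail : ∑ i ∈ range m,
          L * (((k + 1).multichoose (i + 1) : ℝ) * b ^ (i + 1) / L ^ (k + 1 + (i + 1)))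
        = ∑ i ∈ range m, ((k.multichoose (i + 1) : ℝ) * b ^ (i + 1) / L ^ (k + (i + 1))
          + b * (((k + 1).multichoose i : ℝ) * b ^ i / L ^ (k + 1 + i))) := by
      refine sum_congr rfl fun i _ => ?_
      rw [Nat.multichoose_succ_succ]
      field_simp
      push_cast
      ring
    have hhead : L * (((k + 1).multichoose 0 : ℝ) * b ^ 0 / L ^ (k + 1 + 0))
        = (k.multichoose 0 : ℝ) * b ^ 0 / L ^ (k + 0) := by
      simp only [Nat.multichoose_zero_right]
      field_simp
      ring
    rw [htail, hhead, sum_add_distrib]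
    ring
  rw [invSubPowRemainder, invSubPowRemainder, invSubPowRemainder, mul_sub, hpow, hsum]
  ring

lemma invSubPowRemainder_isBigO (b : ℝ) (k m : ℕ) :
    invSubPowRemainder b k m =O[atTop] fun L => (L ^ (k + m))⁻¹ := by
  induction m generalizing k with
  | zero =>
    have h : invSubPowRemainder b k 0 = fun L => ((L - b) ^ k)⁻¹ := by
      funext L
      simp [invSubPowRemainder]
    rw [h]
    exact isBigO_inv_sub_pow b k
  | succ m ihm =>
    induction k with
    | zero =>
      rw [invSubPowRemainder_zero_succ]
      exact isBigO_zero _ _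
    | succ k ihk =>
      have hrec : invSubPowRemainder b (k + 1) (m + 1) =ᶠ[atTop]
          fun L => L⁻¹ * (invSubPowRemainder b k (m + 1) L
            + b * invSubPowRemainder b (k + 1) m L) := by
        filter_upwards [eventually_gt_atTop 0, eventually_gt_atTop b] with L hL hLb
        rw [← mul_invSubPowRemainder_succ_succ hL.ne' (sub_pos.2 hLb).ne',
          inv_mul_cancel_left₀ hL.ne']
      have hm : invSubPowRemainder b (k + 1) m =O[atTop] fun L => (L ^ (k + (m + 1)))⁻¹ := by
        have h := ihm (k + 1)
        rwa [Nat.add_right_comm k 1 m] at h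
      refine IsBigO.congr' ((isBigO_refl (fun L : ℝ => L⁻¹) _).mul
        (ihk.add (hm.const_mul_left b))) hrec.symm (Eventually.of_forall fun L => ?_)
      show L⁻¹ * (L ^ (k + (m + 1)))⁻¹ = (L ^ (k + 1 + (m + 1)))⁻¹
      ring

noncomputable def factorialExpPartialSum (b : ℝ) (j : ℕ) : ℝ :=
  j ! * ∑ t ∈ range (j + 1), b ^ t / t !

lemma factorial_mul_multichoose_succ (k i : ℕ) :
    (k ! : ℝ) * (k + 1).multichoose i = (k + i) ! / i ! := by
  rw [eq_div_iff (by positivity), ← Nat.add_choose_mul_factorial_mul_factorial k i,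
    Nat.multichoose_eq, Nat.add_right_comm, Nat.add_sub_cancel]
  push_cast
  ring

lemma sum_factorial_mul_multichoose_div (b L : ℝ) (n : ℕ) :
    ∑ k ∈ range n, ∑ i ∈ range (n - k),
        (k ! : ℝ) * ((k + 1).multichoose i * b ^ i / L ^ (k + 1 + i))
      = ∑ j ∈ range n, factorialExpPartialSum b j / L ^ (j + 1) := by
  rw [← sum_range_diag_flip]
  refine sum_congr rfl fun j _ => ?_
  rw [factorialExpPartialSum, ← sum_range_reflect (fun t => b ^ t / t !), mul_sum, sum_div]
  refine sum_congr rfl fun k hk => ?_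
  obtain ⟨i, rfl⟩ := Nat.exists_eq_add_of_le (Nat.lt_succ_iff.1 (mem_range.1 hk))
  rw [Nat.add_sub_cancel_left, Nat.add_sub_cancel, Nat.add_sub_cancel_left, mul_div_assoc',
    ← mul_assoc, factorial_mul_multichoose_succ, Nat.add_right_comm]
  ring

lemma sum_factorial_div_sub_pow_sub_isBigO (b : ℝ) (n : ℕ) :
    (fun L : ℝ => ∑ k ∈ range n, (k ! : ℝ) / (L - b) ^ (k + 1)
        - ∑ j ∈ range n, factorialExpPartialSum b j / L ^ (j + 1))
      =O[atTop] fun L => (L ^ (n + 1))⁻¹ := by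
  have h : ∀ L : ℝ, ∑ k ∈ range n, (k ! : ℝ) / (L - b) ^ (k + 1)
        - ∑ j ∈ range n, factorialExpPartialSum b j / L ^ (j + 1)
      = ∑ k ∈ range n, k ! * invSubPowRemainder b (k + 1) (n - k) L := by
    intro L
    rw [← sum_factorial_mul_multichoose_div]
    simp only [invSubPowRemainder, mul_sub, sum_sub_distrib, mul_sum, div_eq_mul_inv]
  simp only [h]
  refine IsBigO.fun_sum fun k hk => ?_
  have hexp : k + 1 + (n - k) = n + 1 := by have := mem_range.1 hk; omega
  simpa only [hexp] using (invSubPowRemainder_isBigO b (k + 1) (n - k)).const_mul_left (k ! : ℝ)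

lemma sum_Icc_one_eq_sum_range (n : ℕ) (f : ℕ → ℝ) :
    ∑ k ∈ Icc 1 n, f k = ∑ k ∈ range n, f (k + 1) := by
  rw [← Finset.Ico_add_one_right_eq_Icc, sum_Ico_eq_sum_range]
  simp [add_comm]

lemma isLittleO_comp_div_exp_sub_sum {P : ℝ → ℝ} {n : ℕ}
    (hP : (fun x => P x - ∑ k ∈ Icc 1 n, ((k - 1)! : ℝ) / log x ^ k)
      =o[atTop] fun x => 1 / log x ^ n) (b : ℝ) :
    (fun x => P (x / exp b) - ∑ k ∈ Icc 1 n, factorialExpPartialSum b (k - 1) / log x ^ k)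
      =o[atTop] fun x => 1 / log x ^ n := by
  simp only [sum_Icc_one_eq_sum_range, Nat.add_sub_cancel, one_div] at hP ⊢
  have hlog : ∀ᶠ x in atTop, log (x / exp b) = log x - b := by
    filter_upwards [eventually_gt_atTop 0] with x hx
    rw [log_div hx.ne' (exp_pos b).ne', log_exp]
  have hshift : (fun x => P (x / exp b) - ∑ k ∈ range n, (k ! : ℝ) / (log x - b) ^ (k + 1))
      =o[atTop] fun x => (log x ^ n)⁻¹ := by
    have h := hP.comp_tendsto (tendsto_id.atTop_div_const (exp_pos b))
    refine IsLittleO.trans_isBigO (h.congr' ?_ ?_)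
      ((isBigO_inv_sub_pow b n).comp_tendsto tendsto_log_atTop)
    all_goals filter_upwards [hlog] with x hx
    all_goals simp only [Function.comp_apply, id, hx]
  have hpow : (fun L : ℝ => (L ^ (n + 1))⁻¹) =o[atTop] fun L => (L ^ n)⁻¹ :=
    (isLittleO_pow_pow_atTop_of_lt (Nat.lt_succ_self n)).inv_rev
      (Eventually.of_forall fun L hL => by rw [pow_succ, hL, zero_mul])
  have hexpand := ((sum_factorial_div_sub_pow_sub_isBigO b n).trans_isLittleO hpow).comp_tendsto
    tendsto_log_atTop
  exact (hshift.add hexpand).congr_left fun x => by simp only [Function.comp_apply]; ring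

theorem expansion_derangements_arrangements (P : ℝ → ℝ)
    (hP : ∀ n : ℕ, 1 ≤ n →
      (fun x : ℝ => P x - ∑ k ∈ Finset.Icc 1 n, (Nat.factorial (k - 1) : ℝ) / (Real.log x) ^ k)
        =o[atTop] (fun x : ℝ => 1 / (Real.log x) ^ n)) :
    (∀ n : ℕ, 1 ≤ n →
      (fun x : ℝ => P (Real.exp 1 * x)
          - ∑ k ∈ Finset.Icc 1 n, derangementsReal (k - 1) / (Real.log x) ^ k)
        =o[atTop] (fun x : ℝ => 1 / (Real.log x) ^ n)) ∧
    (∀ n : ℕ, 1 ≤ n →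
      (fun x : ℝ => P (x / Real.exp 1)
          - ∑ k ∈ Finset.Icc 1 n, arrangementsReal (k - 1) / (Real.log x) ^ k)
        =o[atTop] (fun x : ℝ => 1 / (Real.log x) ^ n)) := by
  refine ⟨fun n hn => ?_, fun n hn => ?_⟩
  · have hdiv : ∀ x, x / exp (-1) = exp 1 * x := fun x => by
      rw [exp_neg, div_inv_eq_mul, mul_comm]
    simpa only [hdiv, factorialExpPartialSum, derangementsReal] using
      isLittleO_comp_div_exp_sub_sum (hP n hn) (-1)
  · simpa only [factorialExpPartialSum, arrangementsReal, one_pow] using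
      isLittleO_comp_div_exp_sub_sum (hP n hn) 1
end

section
/- For every real x > 0, one has 1/(2x+1) < H_x − γ − log x < 1/(2x), where H_x = ψ(x+1) + γ with ψ the digamma function; in particular H_x − γ − log x ~ 1/(2x) as x → ∞. -/
/-!
Write `R(x) = ψ(x + 1) - log x`. The slope of the convex function `log ∘ Γ` over `[x, x + 1]` is
`log x`, so comparing it with the derivatives `ψ` at the endpoints gives
`0 ≤ R(x) ≤ log (1 + 1/x) ≤ 1/x`; in particular `R → 0`. By `ψ(x + 1) = ψ(x) + 1/x`,
`R(x) - R(x + 1) = log (1 + 1/x) - 1/(x + 1)`, and the series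
`log (1 + 1/x) = ∑ 2 u^(2k+1) / (2k+1)`, `u = 1/(2x + 1)`, lies strictly between its first term
and the geometric series `∑ 2 u^(2k+1) = (1/x + 1/(x + 1)) / 2`. Hence the decrement of `R` under
`x ↦ x + 1` lies strictly between those of `1/(2x + 1)` and `1/(2x)`, and since all three functions
tend to `0`, `R` lies strictly between them. The equivalence follows by squeezing.
-/

open Real Filter Asymptotics

/-- The digamma function `ψ = Γ'/Γ`. -/
noncomputable def digamma (x : ℝ) : ℝ := deriv Real.Gamma x / Real.Gamma x

/-- The continuous interpolation `H_x = ψ(x+1) + γ` of the harmonic numbers. -/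
noncomputable def harmonicInterp (x : ℝ) : ℝ :=
  digamma (x + 1) + Real.eulerMascheroniConstant

open Set Topology

section LogOneAddInv

variable {t : ℝ}

theorem log_add_one_sub_log (ht : 0 < t) : log (t + 1) - log t = log (1 + t⁻¹) := by
  rw [← log_div (by linarith) ht.ne', add_div, div_self ht.ne', one_div, add_comm]

theorem two_div_two_mul_add_one_lt_log_one_add_inv (ht : 0 < t) :
    2 / (2 * t + 1) < log (1 + t⁻¹) := by
  refine hasSum_lt (f := fun k : ℕ => if k = 0 then 2 / (2 * t + 1) else 0) (i := 1)
    (fun k => ?_) ?_ (hasSum_ite_eq 0 _) (hasSum_log_one_add_inv ht)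
  · rcases eq_or_ne k 0 with rfl | hk
    · norm_num [div_eq_mul_inv]
    · simp only [hk, if_false]
      positivity
  · simp only [one_ne_zero, if_false]
    positivity

theorem log_one_add_inv_lt_inv_add_inv_div_two (ht : 0 < t) :
    log (1 + t⁻¹) < (t⁻¹ + (t + 1)⁻¹) / 2 := by
  have hlog := hasSum_log_one_add_inv ht
  generalize hu_def : 1 / (2 * t + 1) = u at hlog
  have hu : 0 < u := hu_def ▸ by positivity
  have hu1 : u ^ 2 < 1 := by
    rw [sq_lt_one_iff₀ hu.le, ← hu_def, div_lt_one (by positivity)]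
    linarith
  have hgeom : HasSum (fun k : ℕ => 2 * u * (u ^ 2) ^ k) ((t⁻¹ + (t + 1)⁻¹) / 2) := by
    rw [show (t⁻¹ + (t + 1)⁻¹) / 2 = 2 * u * (1 - u ^ 2)⁻¹ by
      rw [← hu_def, div_pow, one_pow, one_sub_div (by positivity),
        show (2 * t + 1) ^ 2 - 1 = 4 * t * (t + 1) by ring, inv_div]
      field_simp
      ring]
    exact (hasSum_geometric_of_lt_one (by positivity) hu1).mul_left (2 * u)
  refine hasSum_lt (i := 1) (fun k => ?_) ?_ hlog hgeom
  · have hk : 1 / (2 * (k : ℝ) + 1) ≤ 1 := by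
      rw [div_le_one (by positivity)]
      linarith [k.cast_nonneg (α := ℝ)]
    have : 0 ≤ (u ^ 2) ^ k * u := by positivity
    rw [pow_succ, pow_mul]
    nlinarith
  · have : 0 < u ^ 3 := by positivity
    norm_num only [Nat.cast_one, pow_one]
    nlinarith

end LogOneAddInv

theorem pos_of_tendsto_zero_of_add_one_lt {g : ℝ → ℝ} {a : ℝ} (hg : Tendsto g atTop (𝓝 0))
    (hstep : ∀ x, a < x → g (x + 1) < g x) {x : ℝ} (hx : a < x) : 0 < g x := by
  have hanti : StrictAnti fun n : ℕ => g (x + n) := strictAnti_nat_of_succ_lt fun n => by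
    simpa [add_assoc] using hstep (x + n) (hx.trans_le (le_add_of_nonneg_right n.cast_nonneg))
  have hlim : Tendsto (fun n : ℕ => g (x + n)) atTop (𝓝 0) :=
    hg.comp (tendsto_atTop_add_const_left _ x tendsto_natCast_atTop_atTop)
  simpa using (hanti.antitone.le_of_tendsto hlim 1).trans_lt (hanti zero_lt_one)

theorem tendsto_one_div_two_mul_add_atTop (c : ℝ) :
    Tendsto (fun x : ℝ => 1 / (2 * x + c)) atTop (𝓝 0) :=
  tendsto_const_nhds.div_atTop
    (tendsto_atTop_add_const_right _ c (tendsto_id.const_mul_atTop two_pos))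

theorem Asymptotics.IsEquivalent.of_le_of_le {α : Type*} {l : Filter α} {u v w : α → ℝ}
    (hvw : v ~[l] w) (hvu : ∀ᶠ x in l, v x ≤ u x) (huw : ∀ᶠ x in l, u x ≤ w x) :
    u ~[l] w := by
  refine IsBigO.trans_isLittleO (IsBigO.of_bound 1 ?_) hvw.isLittleO
  filter_upwards [hvu, huw] with x hvux huwx
  rw [one_mul, Real.norm_of_nonpos (by simpa using huwx),
    Real.norm_of_nonpos (by simpa using hvux.trans huwx)]
  simp only [Pi.sub_apply]
  linarith

theorem one_div_two_mul_add_one_isEquivalent :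
    (fun x : ℝ => 1 / (2 * x + 1)) ~[atTop] fun x => 1 / (2 * x) := by
  have h : (fun x : ℝ => 2 * x + 1) ~[atTop] fun x => 2 * x :=
    IsEquivalent.refl.add_isLittleO <| isLittleO_const_left.2 <| Or.inr <|
      tendsto_norm_atTop_atTop.comp (tendsto_id.const_mul_atTop two_pos)
  simp only [one_div]
  exact h.inv

section Digamma

variable {x : ℝ}

theorem differentiableAt_Gamma_of_pos (hx : 0 < x) : DifferentiableAt ℝ Gamma x :=
  differentiableAt_Gamma fun m => (neg_nonpos.2 m.cast_nonneg).trans_lt hx |>.ne'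

theorem differentiableAt_log_Gamma (hx : 0 < x) : DifferentiableAt ℝ (log ∘ Gamma) x :=
  (differentiableAt_Gamma_of_pos hx).log (Gamma_pos_of_pos hx).ne'

theorem digamma_eq_deriv_log_Gamma (hx : 0 < x) : digamma x = deriv (log ∘ Gamma) x :=
  (deriv.log (differentiableAt_Gamma_of_pos hx) (Gamma_pos_of_pos hx).ne').symm

theorem digamma_add_one (hx : 0 < x) : digamma (x + 1) = digamma x + x⁻¹ := by
  have hlog : log ∘ Gamma ∘ (· + 1) =ᶠ[𝓝 x] log ∘ Gamma + log := by
    filter_upwards [eventually_gt_nhds hx] with y hy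
    simp [Gamma_add_one hy.ne', log_mul hy.ne' (Gamma_pos_of_pos hy).ne', add_comm]
  rw [digamma_eq_deriv_log_Gamma hx, digamma_eq_deriv_log_Gamma (by linarith), ← deriv_log x,
    ← deriv_add (differentiableAt_log_Gamma hx) (differentiableAt_log hx.ne'),
    ← hlog.deriv_eq, ← deriv_comp_add_const]
  rfl

theorem slope_log_Gamma (hx : 0 < x) : slope (log ∘ Gamma) x (x + 1) = log x := by
  simp [slope_def_field, Gamma_add_one hx.ne', log_mul hx.ne' (Gamma_pos_of_pos hx).ne']

theorem digamma_le_log (hx : 0 < x) : digamma x ≤ log x := by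
  rw [digamma_eq_deriv_log_Gamma hx, ← slope_log_Gamma hx]
  exact convexOn_log_Gamma.deriv_le_slope hx (show 0 < x + 1 by linarith) (by linarith)
    (differentiableAt_log_Gamma hx)

theorem log_le_digamma_add_one (hx : 0 < x) : log x ≤ digamma (x + 1) := by
  have hx1 : 0 < x + 1 := by linarith
  rw [digamma_eq_deriv_log_Gamma hx1, ← slope_log_Gamma hx]
  exact convexOn_log_Gamma.slope_le_deriv hx hx1 (by linarith) (differentiableAt_log_Gamma hx1)

theorem digamma_add_one_sub_log_nonneg (hx : 0 < x) : 0 ≤ digamma (x + 1) - log x :=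
  sub_nonneg.2 (log_le_digamma_add_one hx)

theorem digamma_add_one_sub_log_le_inv (hx : 0 < x) : digamma (x + 1) - log x ≤ x⁻¹ := by
  have h := digamma_le_log (x := x + 1) (by linarith)
  have hlog := log_le_sub_one_of_pos (show 0 < 1 + x⁻¹ by positivity)
  linarith [log_add_one_sub_log hx]

theorem tendsto_digamma_add_one_sub_log :
    Tendsto (fun x => digamma (x + 1) - log x) atTop (𝓝 0) :=
  tendsto_of_tendsto_of_tendsto_of_le_of_le' tendsto_const_nhds tendsto_inv_atTop_zero
    (eventually_gt_atTop 0 |>.mono fun _ => digamma_add_one_sub_log_nonneg)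
    (eventually_gt_atTop 0 |>.mono fun _ => digamma_add_one_sub_log_le_inv)

theorem digamma_add_one_sub_log_sub_succ (hx : 0 < x) :
    (digamma (x + 1) - log x) - (digamma (x + 1 + 1) - log (x + 1)) =
      log (1 + x⁻¹) - (x + 1)⁻¹ := by
  rw [digamma_add_one (x := x + 1) (by linarith), ← log_add_one_sub_log hx]
  ring

theorem one_div_two_mul_add_one_lt_digamma_add_one_sub_log (hx : 0 < x) :
    1 / (2 * x + 1) < digamma (x + 1) - log x := by
  refine sub_pos.1 <| pos_of_tendsto_zero_of_add_one_lt
    (g := fun y => digamma (y + 1) - log y - 1 / (2 * y + 1))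
    (by simpa using tendsto_digamma_add_one_sub_log.sub (tendsto_one_div_two_mul_add_atTop 1))
    (fun y hy => ?_) hx
  have hconv : (y + 1)⁻¹ ≤ 1 / (2 * y + 1) + 1 / (2 * (y + 1) + 1) := by
    rw [div_add_div _ _ (by positivity) (by positivity), inv_eq_one_div,
      div_le_div_iff₀ (by positivity) (by positivity)]
    nlinarith
  have := two_div_two_mul_add_one_lt_log_one_add_inv hy
  linarith [digamma_add_one_sub_log_sub_succ hy, mul_one_div (2 : ℝ) (2 * y + 1)]

theorem digamma_add_one_sub_log_lt_one_div_two_mul (hx : 0 < x) :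
    digamma (x + 1) - log x < 1 / (2 * x) := by
  refine sub_pos.1 <| pos_of_tendsto_zero_of_add_one_lt
    (g := fun y => 1 / (2 * y) - (digamma (y + 1) - log y))
    (by simpa using (tendsto_one_div_two_mul_add_atTop 0).sub tendsto_digamma_add_one_sub_log)
    (fun y hy => ?_) hx
  have htrap : 1 / (2 * y) - 1 / (2 * (y + 1)) = (y⁻¹ + (y + 1)⁻¹) / 2 - (y + 1)⁻¹ := by
    field_simp
    ring
  have := log_one_add_inv_lt_inv_add_inv_div_two hy
  linarith [digamma_add_one_sub_log_sub_succ hy]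

end Digamma

theorem harmonicInterp_sub_log_bounds :
    (∀ x : ℝ, 0 < x →
      1 / (2 * x + 1) < harmonicInterp x - Real.eulerMascheroniConstant - Real.log x ∧
      harmonicInterp x - Real.eulerMascheroniConstant - Real.log x < 1 / (2 * x)) ∧
    (fun x : ℝ => harmonicInterp x - Real.eulerMascheroniConstant - Real.log x)
      ~[atTop] (fun x : ℝ => 1 / (2 * x)) := by
  have hval (x : ℝ) : harmonicInterp x - eulerMascheroniConstant - log x =
      digamma (x + 1) - log x := by
    rw [harmonicInterp]
    ring
  have hlower := @one_div_two_mul_add_one_lt_digamma_add_one_sub_log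
  have hupper := @digamma_add_one_sub_log_lt_one_div_two_mul
  simp only [hval]
  refine ⟨fun x hx => ⟨hlower hx, hupper hx⟩, ?_⟩
  exact one_div_two_mul_add_one_isEquivalent.of_le_of_le
    (eventually_gt_atTop 0 |>.mono fun _ hx => (hlower hx).le)
    (eventually_gt_atTop 0 |>.mono fun _ hx => (hupper hx).le)
end

section
/- The limit lim_{n→∞} (li(n) − ∑_{k=1}^{n} 1/(H_k − γ)) exists (is a finite real number). -/
open Real Filter MeasureTheory Topology

/-- Principal value of `∫_0^x dt/(log t)^m` around the singularity at `t = 1`. -/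
noncomputable def pvLogInt (m : ℕ) (x : ℝ) : ℝ :=
  limUnder (nhdsWithin (0:ℝ) (Set.Ioi 0)) (fun ε =>
    (∫ t in (0:ℝ)..(1 - ε), 1 / (Real.log t) ^ m) +
      ∫ t in (1 + ε)..x, 1 / (Real.log t) ^ m)

/-- `li x` is the Cauchy principal value of `∫_0^x dt / log t`. -/
noncomputable def li (x : ℝ) : ℝ := pvLogInt 1 x

/-
Subtracting the pole of `1 / log t` at `t = 1` leaves `1 / log t - 1 / (t - 1)`, which lies in
`[0, 1]` for `t ≥ 0` because `1 - 1 / t ≤ log t ≤ t - 1`; so for `x > 1` the principal value exists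
and `li x = ∫₀ˣ (1 / log t - 1 / (t - 1)) dt + log (x - 1)`. In particular
`li (n + 1) - li n = ∫ₙⁿ⁺¹ dt / log t`, which lies in `[1 / log (n + 1), 1 / log n]`, while
`log (n + 1) < H_{n+1} - γ < log (n + 2)`. Hence the `n`-th increment of the sequence is at most
`1 / log n - 1 / log (n + 2)` in absolute value, a telescoping bound, and the sequence is Cauchy.
-/

open Set
open scoped Interval

theorem exists_tendsto_of_abs_sub_le_sub {u v : ℕ → ℝ} (hv : BddBelow (range v))
    (huv : ∀ᶠ n in atTop, |u (n + 1) - u n| ≤ v n - v (n + 1)) :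
    ∃ L, Tendsto u atTop (𝓝 L) := by
  obtain ⟨N, hN⟩ := eventually_atTop.1 huv
  obtain ⟨m, hm⟩ := hv
  have hstep (n : ℕ) : |u (n + 1 + N) - u (n + N)| ≤ v (n + N) - v (n + 1 + N) := by
    simpa only [add_right_comm n 1 N] using hN (n + N) (Nat.le_add_left N n)
  have hsum : Summable fun n => v (n + N) - v (n + 1 + N) := by
    refine summable_of_sum_range_le (c := v N - m) (fun n => (abs_nonneg _).trans (hstep n))
      fun n => ?_
    rw [Finset.sum_range_sub' (fun i => v (i + N)), zero_add]
    linarith [hm ⟨n + N, rfl⟩]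
  have hcauchy : CauchySeq fun n => u (n + N) :=
    cauchySeq_of_dist_le_of_summable _ (fun n => by rw [dist_comm]; exact hstep n) hsum
  obtain ⟨L, hL⟩ := cauchySeq_tendsto_of_complete hcauchy
  exact ⟨L, (tendsto_add_atTop_iff_nat N).1 hL⟩

theorem tendsto_intervalIntegral_add_intervalIntegral_nhdsGT {f : ℝ → ℝ} {a b c : ℝ}
    (hf : IntervalIntegrable f volume a b) (hc : c ∈ Ioo a b) :
    Tendsto (fun ε => (∫ t in a..c - ε, f t) + ∫ t in c + ε..b, f t) (𝓝[>] 0)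
      (𝓝 (∫ t in a..b, f t)) := by
  set F := fun x => ∫ t in a..x, f t
  have hab : a ≤ b := hc.1.le.trans hc.2.le
  have hFc : ContinuousAt F c := by
    refine (intervalIntegral.continuousOn_primitive_interval (b := b) ?_).continuousAt ?_
    · rw [uIcc_of_le hab]
      exact (intervalIntegrable_iff_integrableOn_Icc_of_le hab).1 hf
    · rw [uIcc_of_le hab]
      exact Icc_mem_nhds hc.1 hc.2
  have hleft : Tendsto (fun ε : ℝ => c - ε) (𝓝[>] 0) (𝓝 c) :=
    ((continuous_const.sub continuous_id).tendsto' 0 c (sub_zero c)).mono_left nhdsWithin_le_nhds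
  have hright : Tendsto (fun ε : ℝ => c + ε) (𝓝[>] 0) (𝓝 c) :=
    ((continuous_const.add continuous_id).tendsto' 0 c (add_zero c)).mono_left nhdsWithin_le_nhds
  have hlim := (hFc.tendsto.comp hleft).add
    ((tendsto_const_nhds (x := F b)).sub (hFc.tendsto.comp hright))
  rw [add_sub_cancel] at hlim
  refine hlim.congr' ?_
  filter_upwards [Ioo_mem_nhdsGT (sub_pos.2 hc.2)] with ε hε
  have hmem : c + ε ∈ [[a, b]] := by
    rw [uIcc_of_le hab]
    constructor <;> linarith [hε.1, hε.2, hc.1]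
  simp only [Function.comp_apply, F]
  rw [intervalIntegral.integral_interval_sub_left hf (hf.mono_set (uIcc_subset_uIcc_left hmem))]

theorem abs_one_div_log_sub_one_div_sub_one_le {t : ℝ} (ht : 0 ≤ t) :
    |1 / log t - 1 / (t - 1)| ≤ 1 := by
  rcases ht.eq_or_lt with rfl | ht
  · norm_num
  rcases eq_or_ne t 1 with rfl | ht1
  · norm_num
  have hprod : 0 < log t * (t - 1) := by
    rcases ht1.lt_or_gt with ht1 | ht1
    · exact mul_pos_of_neg_of_neg (log_neg ht ht1) (by linarith)
    · exact mul_pos (log_pos ht1) (by linarith)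
  have hupper : log t ≤ t - 1 := log_le_sub_one_of_pos ht
  have hlower : t - 1 ≤ t * log t :=
    calc t - 1 = t * (1 - t⁻¹) := by field_simp
      _ ≤ t * log t := by gcongr; exact one_sub_inv_le_log_of_pos ht
  rw [div_sub_div _ _ (log_ne_zero_of_pos_of_ne_one ht ht1) (sub_ne_zero.2 ht1), abs_div,
    abs_of_pos hprod, div_le_one hprod, abs_le]
  constructor <;> nlinarith

theorem intervalIntegrable_one_div_log_sub_one_div_sub_one {a b : ℝ} (ha : 0 ≤ a) (hb : 0 ≤ b) :
    IntervalIntegrable (fun t => 1 / log t - 1 / (t - 1)) volume a b := by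
  refine IntegrableOn.intervalIntegrable (Measure.integrableOn_of_bounded (M := 1)
    measure_Icc_lt_top.ne (by fun_prop) ?_)
  refine (ae_restrict_iff' measurableSet_Icc).2 (ae_of_all _ fun t ht => ?_)
  exact abs_one_div_log_sub_one_div_sub_one_le ((le_min ha hb).trans ht.1)

theorem integral_one_div_log_eq_add {a b : ℝ} (ha : 0 ≤ a) (hb : 0 ≤ b) (h1 : (1 : ℝ) ∉ [[a, b]]) :
    ∫ t in a..b, 1 / log t =
      (∫ t in a..b, (1 / log t - 1 / (t - 1))) + ∫ t in a..b, 1 / (t - 1) := by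
  rw [← intervalIntegral.integral_add (intervalIntegrable_one_div_log_sub_one_div_sub_one ha hb)
    (intervalIntegral.intervalIntegrable_one_div (fun t ht => sub_ne_zero.2 (ne_of_mem_of_not_mem ht h1))
      (by fun_prop))]
  simp only [sub_add_cancel]

theorem integral_one_div_sub_one_of_one_lt {a b : ℝ} (ha : 1 < a) (hb : 1 < b) :
    ∫ t in a..b, 1 / (t - 1) = log (b - 1) - log (a - 1) := by
  rw [intervalIntegral.integral_comp_sub_right (fun t => 1 / t),
    integral_one_div_of_pos (by linarith) (by linarith), log_div (by linarith) (by linarith)]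

theorem integral_one_div_sub_one_add_integral_one_div_sub_one {ε x : ℝ} (hε : 0 < ε)
    (hx : 1 + ε < x) :
    (∫ t in (0 : ℝ)..1 - ε, 1 / (t - 1)) + ∫ t in 1 + ε..x, 1 / (t - 1) = log (x - 1) := by
  rw [intervalIntegral.integral_comp_sub_right (fun t => 1 / t),
    integral_one_div_of_neg (by norm_num) (by linarith),
    integral_one_div_sub_one_of_one_lt (by linarith) (by linarith)]
  norm_num

theorem li_eq_integral_add_log {x : ℝ} (hx : 1 < x) :
    li x = (∫ t in (0 : ℝ)..x, (1 / log t - 1 / (t - 1))) + log (x - 1) := by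
  have hreg := tendsto_intervalIntegral_add_intervalIntegral_nhdsGT
    (intervalIntegrable_one_div_log_sub_one_div_sub_one le_rfl (by linarith : (0 : ℝ) ≤ x))
    (⟨zero_lt_one, hx⟩ : (1 : ℝ) ∈ Ioo 0 x)
  refine ((hreg.add_const (log (x - 1))).congr' ?_).limUnder_eq
  filter_upwards [Ioo_mem_nhdsGT (lt_min zero_lt_one (sub_pos.2 hx))] with ε ⟨hε, hεmin⟩
  have hε1 : ε < 1 := hεmin.trans_le (min_le_left _ _)
  have hεx : 1 + ε < x := by linarith [min_le_right 1 (x - 1)]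
  simp only [pow_one]
  rw [integral_one_div_log_eq_add le_rfl (by linarith) ?_,
    integral_one_div_log_eq_add (by linarith) (by linarith) ?_,
    ← integral_one_div_sub_one_add_integral_one_div_sub_one hε hεx]
  · ring
  · rw [uIcc_of_le hεx.le]; exact fun h => by linarith [h.1]
  · rw [uIcc_of_le (by linarith)]; exact fun h => by linarith [h.2]

theorem li_sub_li {x y : ℝ} (hx : 1 < x) (hy : 1 < y) :
    li y - li x = ∫ t in x..y, 1 / log t := by
  have hint {z : ℝ} (hz : 1 < z) := intervalIntegrable_one_div_log_sub_one_div_sub_one le_rfl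
    (by linarith : (0 : ℝ) ≤ z)
  have h1 : (1 : ℝ) ∉ [[x, y]] := fun h => by
    rcases le_total x y with hxy | hxy
    · rw [uIcc_of_le hxy] at h; linarith [h.1]
    · rw [uIcc_of_ge hxy] at h; linarith [h.1]
  rw [li_eq_integral_add_log hx, li_eq_integral_add_log hy,
    integral_one_div_log_eq_add (by linarith) (by linarith) h1,
    ← intervalIntegral.integral_interval_sub_left (hint hy) (hint hx),
    integral_one_div_sub_one_of_one_lt hx hy]
  ring

theorem integral_one_div_log_mem_Icc {x : ℝ} (hx : 1 < x) :
    ∫ t in x..x + 1, 1 / log t ∈ Icc (1 / log (x + 1)) (1 / log x) := by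
  have hanti : AntitoneOn (fun t => 1 / log t) (Icc x (x + 1)) := fun s hs t _ hst =>
    one_div_le_one_div_of_le (log_pos (hx.trans_le hs.1)) (log_le_log (by linarith [hs.1]) hst)
  have hxx : x ≤ x + 1 := by linarith
  have hint : IntervalIntegrable (fun t => 1 / log t) volume x (x + 1) :=
    AntitoneOn.intervalIntegrable (by rwa [uIcc_of_le hxx])
  constructor
  · simpa using intervalIntegral.integral_mono_on hxx intervalIntegrable_const hint
      fun t ht => hanti ht ⟨by linarith, le_rfl⟩ ht.2
  · simpa using intervalIntegral.integral_mono_on hxx hint intervalIntegrable_const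
      fun t ht => hanti ⟨le_rfl, hxx⟩ ht ht.1

theorem sum_Icc_one_div_eq_harmonic (n : ℕ) : ∑ j ∈ Finset.Icc 1 n, (1 : ℝ) / j = harmonic n := by
  simp [harmonic_eq_sum_Icc, one_div]

theorem log_lt_harmonic_sub_eulerMascheroniConstant {n : ℕ} (hn : n ≠ 0) :
    log n < harmonic n - eulerMascheroniConstant := by
  have := eulerMascheroniConstant_lt_eulerMascheroniSeq' n
  rw [eulerMascheroniSeq', if_neg hn] at this
  linarith

theorem harmonic_sub_eulerMascheroniConstant_lt_log_add_one (n : ℕ) :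
    harmonic n - eulerMascheroniConstant < log (n + 1) := by
  have := eulerMascheroniSeq_lt_eulerMascheroniConstant n
  rw [eulerMascheroniSeq] at this
  linarith

theorem abs_integral_one_div_log_sub_one_div_harmonic_le {n : ℕ} (hn : 2 ≤ n) :
    |(∫ t in (n : ℝ)..n + 1, 1 / log t) - 1 / (harmonic (n + 1) - eulerMascheroniConstant)|
      ≤ 1 / log n - 1 / log (n + 2) := by
  have hn' : (2 : ℝ) ≤ n := by exact_mod_cast hn
  have hI := integral_one_div_log_mem_Icc (by linarith : (1 : ℝ) < n)
  have hlo := log_lt_harmonic_sub_eulerMascheroniConstant n.succ_ne_zero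
  have hhi := harmonic_sub_eulerMascheroniConstant_lt_log_add_one (n + 1)
  push_cast at hlo hhi
  rw [add_assoc, one_add_one_eq_two] at hhi
  have hlog : 0 < log ((n : ℝ) + 1) := log_pos (by linarith)
  have h1 := one_div_lt_one_div_of_lt hlog hlo
  have h2 := one_div_lt_one_div_of_lt (hlog.trans hlo) hhi
  rw [abs_le]
  constructor <;> linarith [hI.1, hI.2]

theorem li_sub_harmonicSum_tendsto :
    ∃ L : ℝ, Tendsto (fun n : ℕ =>
        li n - ∑ k ∈ Finset.Icc 1 n,
          1 / ((∑ j ∈ Finset.Icc 1 k, (1 : ℝ) / j) - Real.eulerMascheroniConstant))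
      atTop (𝓝 L) := by
  simp only [sum_Icc_one_div_eq_harmonic]
  refine exists_tendsto_of_abs_sub_le_sub (v := fun n : ℕ => 1 / log n + 1 / log (n + 1 : ℕ))
    ⟨0, ?_⟩ ?_
  · rintro _ ⟨n, rfl⟩
    positivity
  · filter_upwards [eventually_ge_atTop 2] with n hn
    have hn' : (2 : ℝ) ≤ n := by exact_mod_cast hn
    have hinc := abs_integral_one_div_log_sub_one_div_harmonic_le hn
    rw [← li_sub_li (by linarith) (by linarith)] at hinc
    rw [Finset.sum_Icc_succ_top (by omega)]
    push_cast
    convert hinc using 1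
    · congr 1
      ring
    · rw [add_assoc, one_add_one_eq_two]
      ring
end

section
/- For all integers k ≥ 2, 0 < 1/log k − 1/(H_k − γ) < 1/(2k (log k)^2), and consequently the series ∑_{k=2}^∞ (1/log k − 1/(H_k − γ)) converges. -/
/-!
Write `H_k - γ = log k + d_k`. Then `1 / log k - 1 / (H_k - γ) = d_k / (log k (log k + d_k))`,
which lies strictly between `0` and `d_k / (log k)^2` once `0 < d_k`. The bound `d_k < 1 / (2k)`
holds because `H_k - log k - 1 / (2k)` increases strictly to `γ`: its increments are positive by
the trapezoid inequality `log (1 + 1/a) < (1/a + 1/(a+1)) / 2` for the convex function `1/t`.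
Summability then follows by comparison with `∑ 1 / (k (log k)^2)`, which converges by Cauchy
condensation.
-/

open Real Filter Topology

/-- With `x = 1 / (2a + 1)`, compare `log (1 + a⁻¹) = 2 ∑ x ^ (2k+1) / (2k+1)` termwise with the
geometric series `2 ∑ x ^ (2k+1) = 2x / (1 - x²)`. -/
lemma Real.log_one_add_inv_lt {a : ℝ} (ha : 0 < a) :
    log (1 + a⁻¹) < (a⁻¹ + (a + 1)⁻¹) / 2 := by
  set x : ℝ := 1 / (2 * a + 1) with hx
  have hx0 : 0 < x := by positivity
  have hx1 : x < 1 := by rw [hx, div_lt_one (by positivity)]; linarith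
  have hgeom : HasSum (fun k : ℕ => 2 * x * (x ^ 2) ^ k) (2 * x * (1 - x ^ 2)⁻¹) :=
    (hasSum_geometric_of_lt_one (by positivity) (by nlinarith)).mul_left (2 * x)
  have hterm (k : ℕ) :
      2 * (1 / (2 * k + 1)) * x ^ (2 * k + 1) = 1 / (2 * k + 1) * (2 * x * (x ^ 2) ^ k) := by
    ring
  have hlt := hasSum_lt (f := fun k : ℕ => 2 * (1 / (2 * (k : ℝ) + 1)) * x ^ (2 * k + 1)) (i := 1)
    (fun k => by
      dsimp only
      rw [hterm]
      exact mul_le_of_le_one_left (by positivity)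
        (div_le_one_of_le₀ (by linarith [k.cast_nonneg (α := ℝ)]) (by positivity)))
    (by rw [hterm]; norm_num; nlinarith [pow_pos hx0 3])
    (hasSum_log_one_add_inv ha) hgeom
  have hx2 : 1 - x ^ 2 = 4 * a * (a + 1) / (2 * a + 1) ^ 2 := by
    rw [hx]; field_simp; ring
  refine hlt.trans_eq ?_
  rw [hx2, hx]
  field_simp
  ring

lemma strictMono_harmonic_sub_log_sub_inv_two_mul :
    StrictMono (fun n : ℕ => (harmonic n : ℝ) - log n - (2 * (n : ℝ))⁻¹) := by
  refine strictMono_nat_of_lt_succ fun n => ?_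
  rcases Nat.eq_zero_or_pos n with rfl | hn
  · norm_num
  · have hn' : (0 : ℝ) < n := by exact_mod_cast hn
    have hlog : log (n + 1) - log n = log (1 + (n : ℝ)⁻¹) := by
      rw [← log_div (by positivity) hn'.ne', add_div, div_self hn'.ne', one_div]
    have htrap := log_one_add_inv_lt hn'
    simp only [harmonic_succ, Rat.cast_add, Rat.cast_inv, Rat.cast_natCast, Nat.cast_add,
      Nat.cast_one]
    rw [mul_inv, mul_inv]
    linarith

lemma tendsto_harmonic_sub_log_sub_inv_two_mul :
    Tendsto (fun n : ℕ => (harmonic n : ℝ) - log n - (2 * (n : ℝ))⁻¹) atTop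
      (𝓝 eulerMascheroniConstant) := by
  have h : Tendsto (fun n : ℕ => (2 * (n : ℝ))⁻¹) atTop (𝓝 0) :=
    tendsto_inv_atTop_zero.comp (tendsto_natCast_atTop_atTop.const_mul_atTop two_pos)
  simpa using tendsto_harmonic_sub_log.sub h

lemma harmonic_sub_log_sub_eulerMascheroniConstant_lt (n : ℕ) :
    (harmonic n : ℝ) - log n - eulerMascheroniConstant < (2 * (n : ℝ))⁻¹ := by
  have := (strictMono_harmonic_sub_log_sub_inv_two_mul (Nat.lt_succ_self n)).trans_le
    (strictMono_harmonic_sub_log_sub_inv_two_mul.monotone.ge_of_tendsto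
      tendsto_harmonic_sub_log_sub_inv_two_mul (n + 1))
  linarith

lemma one_div_sub_one_div_add_lt {L d : ℝ} (hL : 0 < L) (hd : 0 < d) :
    1 / L - 1 / (L + d) < d / L ^ 2 := by
  rw [div_sub_div _ _ hL.ne' (by positivity), div_lt_div_iff₀ (by positivity) (by positivity)]
  nlinarith [mul_pos (mul_pos hL hL) hd, mul_pos hd hd]

lemma Real.summable_one_div_nat_mul_log_sq : Summable fun n : ℕ => 1 / (n * log n ^ 2) := by
  rw [← summable_condensed_iff_of_eventually_nonneg (.of_forall fun n => by positivity)]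
  · have : Summable fun k : ℕ => (log 2 ^ 2)⁻¹ * ((k : ℝ) ^ 2)⁻¹ :=
      (summable_nat_pow_inv.mpr one_lt_two).mul_left _
    refine this.congr fun k => ?_
    push_cast
    rw [Real.log_pow]
    rcases Nat.eq_zero_or_pos k with rfl | hk
    · simp
    · field_simp
  · filter_upwards [eventually_ge_atTop 2] with n hn
    have hlog : 0 < log n := log_pos (by exact_mod_cast hn)
    gcongr <;> omega

lemma one_div_log_sub_one_div_harmonic_sub_eulerMascheroniConstant_bounds {k : ℕ} (hk : 2 ≤ k) :
    0 < 1 / log k - 1 / (harmonic k - eulerMascheroniConstant) ∧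
      1 / log k - 1 / (harmonic k - eulerMascheroniConstant) < 1 / (2 * k * log k ^ 2) := by
  have hL : 0 < log k := log_pos (by exact_mod_cast hk)
  set d : ℝ := harmonic k - log k - eulerMascheroniConstant
  have hd : 0 < d := by
    have := eulerMascheroniConstant_lt_eulerMascheroniSeq' k
    rw [eulerMascheroniSeq', if_neg (by omega)] at this
    linarith
  have hdk : d < (2 * (k : ℝ))⁻¹ := harmonic_sub_log_sub_eulerMascheroniConstant_lt k
  have hH : (harmonic k : ℝ) - eulerMascheroniConstant = log k + d := by ring
  rw [hH]
  constructor
  · exact sub_pos.mpr (one_div_lt_one_div_of_lt hL (by linarith))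
  · calc 1 / log k - 1 / (log k + d) < d / log k ^ 2 := one_div_sub_one_div_add_lt hL hd
      _ ≤ (2 * (k : ℝ))⁻¹ / log k ^ 2 := by gcongr
      _ = 1 / (2 * k * log k ^ 2) := by field_simp

theorem log_inv_sub_harmonic_inv_bounds :
    (∀ k : ℕ, 2 ≤ k →
      0 < 1 / Real.log k
          - 1 / ((∑ j ∈ Finset.Icc 1 k, (1 : ℝ) / j) - Real.eulerMascheroniConstant) ∧
      1 / Real.log k
          - 1 / ((∑ j ∈ Finset.Icc 1 k, (1 : ℝ) / j) - Real.eulerMascheroniConstant)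
        < 1 / (2 * k * (Real.log k) ^ 2)) ∧
    Summable (fun k : ℕ =>
      1 / Real.log (k + 2)
        - 1 / ((∑ j ∈ Finset.Icc 1 (k + 2), (1 : ℝ) / j) - Real.eulerMascheroniConstant)) := by
  have hsum (k : ℕ) : ∑ j ∈ Finset.Icc 1 k, (1 : ℝ) / j = harmonic k := by
    simp [harmonic_eq_sum_Icc]
  simp only [hsum]
  have hshift (k : ℕ) :=
    one_div_log_sub_one_div_harmonic_sub_eulerMascheroniConstant_bounds (k := k + 2) (by omega)
  push_cast at hshift
  refine ⟨fun k hk => one_div_log_sub_one_div_harmonic_sub_eulerMascheroniConstant_bounds hk, ?_⟩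
  exact (((summable_nat_add_iff 2).mpr summable_one_div_nat_mul_log_sq).mul_left (1 / 2))
    |>.of_nonneg_of_le (fun k => (hshift k).1.le)
      (fun k => (hshift k).2.le.trans_eq (by push_cast; field_simp))
end

section
/- Suppose f is defined on an unbounded subset X of ℂ, {a_n} and {b_n} are sequences of complex numbers with a_n ≠ 0, and w_n(z) denotes the n-th approximant of the Jacobi continued fraction a_1/(z+b_1 − a_2/(z+b_2 − a_3/(z+b_3 − ⋯))). If f(z) − w_n(z) = O(1/z^{2n+1}) (z → ∞ in X) for a given n, then w_n(z) is the unique rational function w(z) ∈ ℂ(z) of degree at most n such that f(z) − w(z) = O(1/z^{2n+1}) (z → ∞ in X). -/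
open Filter Asymptotics Polynomial Bornology

/-- The `n`-th approximant of the Jacobi continued fraction
`a 1 / (z + b 1 - a 2 / (z + b 2 - a 3 / (z + b 3 - ⋯)))`. -/
noncomputable def jacobiApprox : (ℕ → ℂ) → (ℕ → ℂ) → ℕ → ℂ → ℂ
  | _, _, 0, _ => 0
  | a, b, n + 1, z =>
      a 1 / (z + b 1 - jacobiApprox (fun k => a (k + 1)) (fun k => b (k + 1)) n z)

/-!
The approximant `w_n` is a quotient `P/Q` of polynomials with `Q` monic of degree `n`. If `p/q`
with `deg q ≤ n` is another rational function approximating `f` to order `1/z^(2n+1)`, then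
`p/q - P/Q = (pQ - Pq)/(qQ)` is `O(1/z^(2n+1))` while `deg (qQ) ≤ 2n`, so the polynomial
`pQ - Pq` is `O(1/z)` at infinity and must vanish.
-/

namespace Polynomial

variable {𝕜 : Type*} [NormedField 𝕜]

theorem eventually_cobounded_eval_ne_zero {p : 𝕜[X]} (hp : p ≠ 0) :
    ∀ᶠ z in cobounded 𝕜, p.eval z ≠ 0 :=
  (finite_setOfPred_isRoot hp).isBounded

theorem eval_isBigO_pow_cobounded {p : 𝕜[X]} {m : ℕ} (h : p.degree ≤ m) :
    p.eval =O[cobounded 𝕜] (· ^ m) := by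
  simpa using isBigO_cobounded_of_degree_le (Q := (X : 𝕜[X]) ^ m) (by simpa using h)

theorem eq_zero_of_eval_isBigO_inv {l : Filter 𝕜} [l.NeBot] (hl : l ≤ cobounded 𝕜) {p : 𝕜[X]}
    (h : p.eval =O[l] (·⁻¹)) : p = 0 := by
  by_contra hp
  have hone : (fun _ ↦ (1 : 𝕜)) =O[l] p.eval := by
    have hdeg : (C (1 : 𝕜)).degree ≤ p.degree := by simpa using zero_le_degree_iff.2 hp
    simpa using (isBigO_cobounded_of_degree_le hdeg).mono hl
  have := (hone.trans h).trans_tendsto (tendsto_inv₀_cobounded.mono_left hl)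
  exact one_ne_zero (tendsto_nhds_unique tendsto_const_nhds this)

theorem mul_eq_mul_of_isBigO_div_sub_div {l : Filter 𝕜} [l.NeBot] (hl : l ≤ cobounded 𝕜)
    {p q P Q : 𝕜[X]} {n : ℕ} (hq : q ≠ 0) (hQ : Q ≠ 0) (hqd : q.degree ≤ n) (hQd : Q.degree ≤ n)
    (h : (fun z ↦ p.eval z / q.eval z - P.eval z / Q.eval z) =O[l] fun z ↦ 1 / z ^ (2 * n + 1)) :
    p * Q = P * q := by
  have hdeg : (q * Q).degree ≤ ↑(2 * n) := by
    rw [degree_mul]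
    calc q.degree + Q.degree ≤ n + n := add_le_add hqd hQd
      _ = ↑(2 * n) := by push_cast; ring
  refine sub_eq_zero.mp (eq_zero_of_eval_isBigO_inv hl ?_)
  refine (h.mul ((eval_isBigO_pow_cobounded hdeg).mono hl)).congr' ?_ ?_
  · filter_upwards [(eventually_cobounded_eval_ne_zero hq).filter_mono hl,
      (eventually_cobounded_eval_ne_zero hQ).filter_mono hl] with z hqz hQz
    simp only [eval_sub, eval_mul]
    field_simp
  · filter_upwards [(eventually_ne_cobounded 0).filter_mono hl] with z hz
    field_simp
    ring

end Polynomial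

theorem jacobiApprox_eventuallyEq_div (a b : ℕ → ℂ) (n : ℕ) :
    ∃ P Q : ℂ[X], Q.Monic ∧ Q.degree = n ∧ P.degree < n ∧
      jacobiApprox a b n =ᶠ[cobounded ℂ] fun z ↦ P.eval z / Q.eval z := by
  induction n generalizing a b with
  | zero => exact ⟨0, 1, monic_one, degree_one, by simp, .of_forall fun z ↦ by simp [jacobiApprox]⟩
  | succ n ih =>
    obtain ⟨P, Q, hQm, hQd, hPd, hE⟩ := ih (fun k ↦ a (k + 1)) (fun k ↦ b (k + 1))
    have hlead : ((X + C (b 1)) * Q).degree = ↑(n + 1) := by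
      rw [degree_mul, degree_X_add_C, hQd]; push_cast; ring
    have hPlt : P.degree < ((X + C (b 1)) * Q).degree :=
      hlead ▸ hPd.trans (by exact_mod_cast n.lt_succ_self)
    -- `a₁ / (z + b₁ - P/Q) = a₁ Q / ((z + b₁) Q - P)`
    refine ⟨C (a 1) * Q, (X + C (b 1)) * Q - P, ((monic_X_add_C _).mul hQm).sub_of_left hPlt,
      (degree_sub_eq_left_of_degree_lt hPlt).trans hlead, ?_, ?_⟩
    · calc (C (a 1) * Q).degree ≤ 0 + n := (degree_mul_le _ _).trans (add_le_add degree_C_le hQd.le)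
        _ < ↑(n + 1) := by rw [zero_add]; exact_mod_cast n.lt_succ_self
    · filter_upwards [hE, eventually_cobounded_eval_ne_zero hQm.ne_zero] with z hz hQz
      rw [jacobiApprox, hz]
      simp only [eval_sub, eval_mul, eval_add, eval_X, eval_C]
      rw [← div_div_eq_mul_div]
      congr 1
      field_simp

theorem jacobi_approximant_best_rational_general (a b : ℕ → ℂ)
    (X : Set ℂ) (hX : (cobounded ℂ ⊓ 𝓟 X).NeBot) (f : ℂ → ℂ) (n : ℕ)
    (hO : (fun z => f z - jacobiApprox a b n z) =O[cobounded ℂ ⊓ 𝓟 X]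
      (fun z => 1 / z ^ (2 * n + 1))) :
    ∀ p q : Polynomial ℂ, q ≠ 0 → p.degree ≤ n → q.degree ≤ n →
      (fun z => f z - p.eval z / q.eval z) =O[cobounded ℂ ⊓ 𝓟 X]
        (fun z => 1 / z ^ (2 * n + 1)) →
      ∀ᶠ z in cobounded ℂ, p.eval z / q.eval z = jacobiApprox a b n z := by
  intro p q hq _ hqd hO'
  obtain ⟨P, Q, hQm, hQd, -, hE⟩ := jacobiApprox_eventuallyEq_div a b n
  have hl : cobounded ℂ ⊓ 𝓟 X ≤ cobounded ℂ := inf_le_left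
  have hOPQ : (fun z ↦ f z - P.eval z / Q.eval z) =O[cobounded ℂ ⊓ 𝓟 X]
      fun z ↦ 1 / z ^ (2 * n + 1) :=
    hO.congr' ((hE.filter_mono hl).mono fun z hz ↦ by simp only [hz]) .rfl
  have hdiff : (fun z ↦ p.eval z / q.eval z - P.eval z / Q.eval z) =O[cobounded ℂ ⊓ 𝓟 X]
      fun z ↦ 1 / z ^ (2 * n + 1) :=
    (hOPQ.sub hO').congr_left fun z ↦ by ring
  have hpQ := mul_eq_mul_of_isBigO_div_sub_div hl hq hQm.ne_zero hqd hQd.le hdiff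
  filter_upwards [hE, eventually_cobounded_eval_ne_zero hq,
    eventually_cobounded_eval_ne_zero hQm.ne_zero] with z hz hqz hQz
  rw [hz, div_eq_div_iff hqz hQz]
  simpa [mul_comm] using congrArg (eval z) hpQ

theorem jacobi_approximant_best_rational (a b : ℕ → ℂ) (ha : ∀ n, a n ≠ 0)
    (X : Set ℂ) (hX : (cobounded ℂ ⊓ 𝓟 X).NeBot) (f : ℂ → ℂ) (n : ℕ)
    (hO : (fun z => f z - jacobiApprox a b n z) =O[cobounded ℂ ⊓ 𝓟 X]
      (fun z => 1 / z ^ (2 * n + 1))) :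
    ∀ p q : Polynomial ℂ, q ≠ 0 → p.degree ≤ n → q.degree ≤ n →
      (fun z => f z - p.eval z / q.eval z) =O[cobounded ℂ ⊓ 𝓟 X]
        (fun z => 1 / z ^ (2 * n + 1)) →
      ∀ᶠ z in cobounded ℂ, p.eval z / q.eval z = jacobiApprox a b n z :=
  jacobi_approximant_best_rational_general a b X hX f n hO
end

section
/- Assuming π(x)·(log x)/x → 1 as x → ∞ and that π(x) − li(x)/1 satisfies π(x)/x − li(x)/x = o(1/(log x)^t) (x → ∞) for all t > 0, one has π(x)/x − 1/(H_x − (1+γ)) ~ 1/(log x)^3 (x → ∞), where H_x = ψ(x+1) + γ; in particular lim_{x→∞} (H_x − x/π(x)) = 1 + γ. -/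
open Real Filter Asymptotics Topology MeasureTheory

/-!
Write `L = log x`. By the fundamental theorem of calculus applied to
`x (1/L + 1/L² + 2/L³)`,
`li x = x (1/L + 1/L² + 2/L³) + 6 ∫₂ˣ dt / log⁴ t + O(1)`,
and splitting the last integral at `√x` shows it is `O(x / L⁴)`. With the hypothesis for `t = 3`
this gives `π(x)/x = 1/L + 1/L² + 2/L³ + o(1/L³)`. Convexity of `log Γ` makes `ψ` monotone, and
`ψ(n + 1) = H_n - γ` lies between `log n` and `log (n + 1)`, so `ψ(x + 1) = L + O(1/x)`.
Both claims then come from inverting the expansion of `π(x)/x`: `1/(L - 1)` differs from it by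
`1/L³ + O(1/L⁴)`, and `x/π(x) = L - 1 + o(1)`.
-/

noncomputable def invLogRegular (t : ℝ) : ℝ := (log t)⁻¹ - (t - 1)⁻¹

-- At `t = 0` and `t = 1` this also holds for the junk values `1` and `0` coming from `0⁻¹ = 0`.
lemma invLogRegular_mem_Icc {t : ℝ} (ht : 0 ≤ t) : invLogRegular t ∈ Set.Icc 0 1 := by
  rcases ht.eq_or_lt with rfl | ht0
  · simp [invLogRegular]
  rcases eq_or_ne t 1 with rfl | ht1
  · simp [invLogRegular]
  have hupper : log t ≤ t - 1 := log_le_sub_one_of_pos ht0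
  have hlower : t - 1 ≤ t * log t := by
    have := one_sub_inv_le_log_of_pos ht0
    rwa [← mul_le_mul_iff_of_pos_left ht0, mul_sub, mul_one, mul_inv_cancel₀ ht0.ne'] at this
  have hprod : 0 < log t * (t - 1) := by
    rcases ht1.lt_or_gt with h | h
    · exact mul_pos_of_neg_of_neg (log_neg ht0 h) (by linarith)
    · exact mul_pos (log_pos h) (by linarith)
  have hform : invLogRegular t = (t - 1 - log t) / (log t * (t - 1)) := by
    have : log t ≠ 0 := left_ne_zero_of_mul hprod.ne'
    have : t - 1 ≠ 0 := sub_ne_zero.2 ht1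
    rw [invLogRegular]
    field_simp
  rw [hform]
  exact ⟨div_nonneg (by linarith) hprod.le, (div_le_one hprod).2 (by nlinarith)⟩

lemma norm_invLogRegular_le {t : ℝ} (ht : 0 ≤ t) : ‖invLogRegular t‖ ≤ 1 := by
  have hmem := invLogRegular_mem_Icc ht
  rw [norm_of_nonneg hmem.1]
  exact hmem.2

lemma intervalIntegrable_invLogRegular {a b : ℝ} (ha : 0 ≤ a) (hb : 0 ≤ b) :
    IntervalIntegrable invLogRegular volume a b := by
  refine (intervalIntegrable_const (c := (1 : ℝ))).mono_fun
    (by unfold invLogRegular; fun_prop) ?_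
  filter_upwards [ae_restrict_mem measurableSet_uIoc] with t ht
  simpa using norm_invLogRegular_le ((le_min ha hb).trans ht.1.le)

lemma integral_inv_sub_one {a b : ℝ} (h : (1 : ℝ) ∉ Set.uIcc a b) :
    ∫ t in a..b, (t - 1)⁻¹ = log ((b - 1) / (a - 1)) := by
  rw [intervalIntegral.integral_comp_sub_right (fun t => t⁻¹), integral_inv]
  simpa [Set.mem_uIcc, sub_nonneg, sub_nonpos, ← le_sub_iff_add_le] using h

lemma integral_inv_log {a b : ℝ} (ha : 0 ≤ a) (hb : 0 ≤ b) (h1 : (1 : ℝ) ∉ Set.uIcc a b) :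
    ∫ t in a..b, (log t)⁻¹ = (∫ t in a..b, invLogRegular t) + log ((b - 1) / (a - 1)) := by
  have hpole : IntervalIntegrable (fun t : ℝ => (t - 1)⁻¹) volume a b :=
    (ContinuousOn.inv₀ (by fun_prop) fun t ht =>
      sub_ne_zero.2 (ne_of_mem_of_not_mem ht h1)).intervalIntegrable
  rw [← integral_inv_sub_one h1,
    ← intervalIntegral.integral_add (intervalIntegrable_invLogRegular ha hb) hpole]
  simp [invLogRegular]

lemma tendsto_integral_invLogRegular_around_one :
    Tendsto (fun ε => ∫ t in (1 - ε)..(1 + ε), invLogRegular t) (𝓝[>] 0) (𝓝 0) := by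
  have hwidth : Tendsto (fun ε : ℝ => 1 * |(1 + ε) - (1 - ε)|) (𝓝[>] 0) (𝓝 0) := by
    have : Continuous fun ε : ℝ => 1 * |(1 + ε) - (1 - ε)| := by fun_prop
    simpa using (this.tendsto 0).mono_left nhdsWithin_le_nhds
  refine squeeze_zero_norm' ?_ hwidth
  filter_upwards [Ioo_mem_nhdsGT one_pos] with ε hε
  exact intervalIntegral.norm_integral_le_of_norm_le_const fun t ht =>
    norm_invLogRegular_le ((le_min (by linarith [hε.2]) (by linarith [hε.1])).trans ht.1.le)

-- For small `ε` the terms `± log ε` coming from the pole `1/(t - 1)` on both sides cancel.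
lemma li_eq_integral_invLogRegular_add_log {x : ℝ} (hx : 1 < x) :
    li x = (∫ t in (0 : ℝ)..x, invLogRegular t) + log (x - 1) := by
  have hgap := tendsto_integral_invLogRegular_around_one
  have hlim := (hgap.const_sub (∫ t in (0 : ℝ)..x, invLogRegular t)).add_const (log (x - 1))
  rw [sub_zero] at hlim
  refine Tendsto.limUnder_eq (hlim.congr' ?_)
  filter_upwards [Ioo_mem_nhdsGT (lt_min one_pos (sub_pos.2 hx))] with ε ⟨hε0, hε⟩
  have hε1 : ε < 1 := hε.trans_le (min_le_left _ _)
  have hεx : ε < x - 1 := hε.trans_le (min_le_right _ _)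
  have hleft : (1 : ℝ) ∉ Set.uIcc 0 (1 - ε) := by
    rw [Set.uIcc_of_le (by linarith)]; exact fun h => by linarith [h.2]
  have hright : (1 : ℝ) ∉ Set.uIcc (1 + ε) x := by
    rw [Set.uIcc_of_le (by linarith)]; exact fun h => by linarith [h.1]
  have hsplit₁ := intervalIntegral.integral_add_adjacent_intervals
    (intervalIntegrable_invLogRegular le_rfl (by linarith : (0 : ℝ) ≤ 1 - ε))
    (intervalIntegrable_invLogRegular (by linarith : (0 : ℝ) ≤ 1 - ε)
      (by linarith : (0 : ℝ) ≤ 1 + ε))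
  have hsplit₂ := intervalIntegral.integral_add_adjacent_intervals
    (intervalIntegrable_invLogRegular le_rfl (by linarith : (0 : ℝ) ≤ 1 + ε))
    (intervalIntegrable_invLogRegular (by linarith : (0 : ℝ) ≤ 1 + ε)
      (by linarith : (0 : ℝ) ≤ x))
  simp only [pow_one, one_div]
  rw [integral_inv_log le_rfl (by linarith) hleft,
    integral_inv_log (by linarith) (by linarith) hright,
    show (1 - ε - 1) / (0 - 1) = ε by ring, show 1 + ε - 1 = ε by ring,
    log_div (by linarith) hε0.ne']
  linarith

lemma li_eq_add_integral_inv_log {x : ℝ} (hx : 2 ≤ x) :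
    li x = (∫ t in (0 : ℝ)..2, invLogRegular t) + ∫ t in (2 : ℝ)..x, (log t)⁻¹ := by
  have h1 : (1 : ℝ) ∉ Set.uIcc 2 x := by
    rw [Set.uIcc_of_le hx]; exact fun h => by linarith [h.1]
  rw [li_eq_integral_invLogRegular_add_log (by linarith),
    integral_inv_log zero_le_two (by linarith) h1,
    ← intervalIntegral.integral_add_adjacent_intervals
      (intervalIntegrable_invLogRegular le_rfl zero_le_two)
      (intervalIntegrable_invLogRegular zero_le_two (by linarith))]
  norm_num
  ring

-- The terms `k ≤ 3` of the asymptotic expansion `li x / x ~ ∑ (k - 1)! / L ^ k`, `L = log x`.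
noncomputable def liExpansion (L : ℝ) : ℝ := L⁻¹ + (L ^ 2)⁻¹ + 2 * (L ^ 3)⁻¹

lemma hasDerivAt_mul_liExpansion_log {t : ℝ} (ht : 1 < t) :
    HasDerivAt (fun s => s * liExpansion (log s)) ((log t)⁻¹ - 6 * (log t ^ 4)⁻¹) t := by
  have hL : log t ≠ 0 := (log_pos ht).ne'
  have hlog : HasDerivAt log t⁻¹ t := hasDerivAt_log (by linarith)
  have h := (hasDerivAt_id' t).fun_mul (((hlog.inv hL).add ((hlog.fun_pow 2).inv
    (pow_ne_zero 2 hL))).add (((hlog.fun_pow 3).inv (pow_ne_zero 3 hL)).const_mul 2))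
  refine (h : HasDerivAt (fun s => s * liExpansion (log s)) _ t).congr_deriv ?_
  simp only [Pi.add_apply, Pi.inv_apply]
  field_simp
  ring

lemma intervalIntegrable_inv_log_pow (k : ℕ) {a b : ℝ} (ha : 1 < a) (hb : 1 < b) :
    IntervalIntegrable (fun t => (log t ^ k)⁻¹) volume a b := by
  refine ContinuousOn.intervalIntegrable ?_
  have hgt : ∀ t ∈ Set.uIcc a b, 1 < t := fun t ht => (lt_min ha hb).trans_le ht.1
  exact ((continuousOn_log.mono fun t ht => by simp; linarith [hgt t ht]).pow k).inv₀
    fun t ht => pow_ne_zero k (log_pos (hgt t ht)).ne'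

lemma integral_inv_log_eq {x : ℝ} (hx : 2 ≤ x) :
    ∫ t in (2 : ℝ)..x, (log t)⁻¹ =
      x * liExpansion (log x) - 2 * liExpansion (log 2) +
        6 * ∫ t in (2 : ℝ)..x, (log t ^ 4)⁻¹ := by
  have hint₁ : IntervalIntegrable (fun t => (log t)⁻¹) volume 2 x := by
    simpa using intervalIntegrable_inv_log_pow 1 one_lt_two (by linarith : (1 : ℝ) < x)
  have hint₄ := intervalIntegrable_inv_log_pow 4 one_lt_two (by linarith : (1 : ℝ) < x)
  have hftc := intervalIntegral.integral_eq_sub_of_hasDerivAt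
    (fun t ht => hasDerivAt_mul_liExpansion_log (t := t) (by
      rw [Set.uIcc_of_le hx] at ht; linarith [ht.1])) (hint₁.sub (hint₄.const_mul 6))
  rw [intervalIntegral.integral_sub hint₁ (hint₄.const_mul 6),
    intervalIntegral.integral_const_mul] at hftc
  linarith

lemma integral_inv_log_pow_le_of_le (k : ℕ) {a b : ℝ} (ha : 1 < a) (hab : a ≤ b) :
    ∫ t in a..b, (log t ^ k)⁻¹ ≤ (b - a) * (log a ^ k)⁻¹ := by
  have := intervalIntegral.integral_mono_on hab
    (intervalIntegrable_inv_log_pow k ha (ha.trans_le hab))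
    intervalIntegrable_const fun t ht => inv_anti₀ (pow_pos (log_pos ha) k)
      (pow_le_pow_left₀ (log_pos ha).le (log_le_log (by linarith) ht.1) k)
  simpa [mul_comm] using this

lemma integral_inv_log_pow_le (k : ℕ) {x : ℝ} (hx : 4 ≤ x) :
    ∫ t in (2 : ℝ)..x, (log t ^ k)⁻¹ ≤
      √x * (log 2 ^ k)⁻¹ + 2 ^ k * x * (log x ^ k)⁻¹ := by
  have hsqrt : 2 ≤ √x := by
    rw [show (2 : ℝ) = √4 by rw [show (4 : ℝ) = 2 ^ 2 by norm_num, sqrt_sq zero_le_two]]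
    exact sqrt_le_sqrt hx
  have hsqrt_le : √x ≤ x := (sqrt_le_left (by linarith)).2 (by nlinarith)
  have hlog_sqrt : log √x = log x / 2 := log_sqrt (by linarith)
  rw [← intervalIntegral.integral_add_adjacent_intervals (b := √x)
    (intervalIntegrable_inv_log_pow k one_lt_two (by linarith))
    (intervalIntegrable_inv_log_pow k (by linarith) (by linarith))]
  have h₁ := integral_inv_log_pow_le_of_le k one_lt_two hsqrt
  have h₂ := integral_inv_log_pow_le_of_le k (by linarith) hsqrt_le
  rw [hlog_sqrt, div_pow, inv_div, div_eq_mul_inv] at h₂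
  have h₂' : 0 ≤ 2 ^ k * (log x ^ k)⁻¹ := by
    have := log_pos (by linarith : (1 : ℝ) < x); positivity
  have : 0 ≤ (log 2 ^ k)⁻¹ := by positivity
  nlinarith [mul_nonneg (sqrt_nonneg x) h₂']

lemma integral_inv_log_pow_isBigO (k : ℕ) :
    (fun x => ∫ t in (2 : ℝ)..x, (log t ^ k)⁻¹) =O[atTop] fun x => x / log x ^ k := by
  have hsmall : ∀ᶠ x : ℝ in atTop, log x ^ k ≤ √x := by
    filter_upwards [(isLittleO_log_rpow_rpow_atTop (k : ℝ) one_half_pos).bound one_pos,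
      eventually_ge_atTop 1] with x hx hx1
    rwa [norm_of_nonneg (rpow_nonneg (log_nonneg hx1) _), rpow_natCast,
      norm_of_nonneg (rpow_nonneg (by linarith) _), ← sqrt_eq_rpow, one_mul] at hx
  refine IsBigO.of_bound ((log 2 ^ k)⁻¹ + 2 ^ k) ?_
  filter_upwards [hsmall, eventually_ge_atTop 4] with x hxk hx
  have hL : 0 < log x ^ k := pow_pos (log_pos (by linarith)) k
  have hsqrt : √x ≤ x / log x ^ k := by
    rw [le_div_iff₀ hL]
    nlinarith [mul_self_sqrt (by linarith : (0 : ℝ) ≤ x), sqrt_nonneg x]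
  rw [norm_of_nonneg (intervalIntegral.integral_nonneg (by linarith) fun t ht =>
    inv_nonneg.2 (pow_nonneg (log_nonneg (by linarith [ht.1])) k)),
    norm_of_nonneg (by positivity)]
  calc _ ≤ √x * (log 2 ^ k)⁻¹ + 2 ^ k * x * (log x ^ k)⁻¹ := integral_inv_log_pow_le k hx
    _ ≤ x / log x ^ k * (log 2 ^ k)⁻¹ + 2 ^ k * x * (log x ^ k)⁻¹ := by gcongr
    _ = _ := by ring

lemma inv_isLittleO_inv_log_pow (n : ℕ) :
    (fun x : ℝ => x⁻¹) =o[atTop] fun x => (log x ^ n)⁻¹ :=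
  isLittleO_pow_log_id_atTop.inv_rev <| (eventually_gt_atTop 1).mono fun _ hx h =>
    absurd h (pow_ne_zero n (log_pos hx).ne')

lemma li_div_sub_liExpansion_isLittleO :
    (fun x => li x / x - liExpansion (log x)) =o[atTop] fun x => (log x ^ 3)⁻¹ := by
  set c := (∫ t in (0 : ℝ)..2, invLogRegular t) - 2 * liExpansion (log 2)
  have hdecomp : (fun x => c * x⁻¹ + 6 * ((∫ t in (2 : ℝ)..x, (log t ^ 4)⁻¹) * x⁻¹))
      =ᶠ[atTop] fun x => li x / x - liExpansion (log x) := by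
    filter_upwards [eventually_ge_atTop 2] with x hx
    rw [li_eq_add_integral_inv_log hx, integral_inv_log_eq hx]
    field_simp
    ring
  have hJ : (fun x => (∫ t in (2 : ℝ)..x, (log t ^ 4)⁻¹) * x⁻¹) =O[atTop]
      fun x => (log x ^ 4)⁻¹ := by
    refine ((integral_inv_log_pow_isBigO 4).mul (isBigO_refl (fun x : ℝ => x⁻¹) atTop)).congr'
      EventuallyEq.rfl ?_
    filter_upwards [eventually_gt_atTop 0] with x hx
    field_simp
  have hpow : (fun x => (log x ^ 4)⁻¹) =o[atTop] fun x => (log x ^ 3)⁻¹ :=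
    (((isLittleO_pow_pow_atTop_of_lt (by norm_num : 3 < 4)).comp_tendsto tendsto_log_atTop).inv_rev
      (Eventually.of_forall fun x hx => by simp_all))
  exact (((inv_isLittleO_inv_log_pow 3).const_mul_left c).add
    ((hJ.trans_isLittleO hpow).const_mul_left 6)).congr' hdecomp EventuallyEq.rfl

lemma deriv_log_comp_Gamma {x : ℝ} (hx : 0 < x) : deriv (log ∘ Gamma) x = digamma x :=
  deriv.log (differentiableOn_Gamma_Ioi.differentiableAt (Ioi_mem_nhds hx))
    (Gamma_pos_of_pos hx).ne'

lemma digamma_le_digamma {a b : ℝ} (ha : 0 < a) (hab : a ≤ b) : digamma a ≤ digamma b := by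
  have hdiff : ∀ x ∈ Set.Ioi (0 : ℝ), DifferentiableAt ℝ (log ∘ Gamma) x := fun x hx =>
    (differentiableOn_Gamma_Ioi.differentiableAt (Ioi_mem_nhds hx)).log (Gamma_pos_of_pos hx).ne'
  have hb : 0 < b := ha.trans_le hab
  simpa only [deriv_log_comp_Gamma ha, deriv_log_comp_Gamma hb] using
    convexOn_log_Gamma.monotoneOn_deriv hdiff ha hb hab

lemma digamma_nat_add_one (n : ℕ) : digamma (n + 1) = harmonic n - eulerMascheroniConstant := by
  rw [digamma, deriv_Gamma_nat, Gamma_nat_eq_factorial]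
  field_simp
  ring

lemma digamma_nat_add_one_mem_Ioo {n : ℕ} (hn : n ≠ 0) :
    digamma (n + 1) ∈ Set.Ioo (log n) (log (n + 1)) := by
  have hlow := eulerMascheroniConstant_lt_eulerMascheroniSeq' n
  have hupp := eulerMascheroniSeq_lt_eulerMascheroniConstant n
  rw [eulerMascheroniSeq', if_neg hn] at hlow
  rw [eulerMascheroniSeq] at hupp
  rw [digamma_nat_add_one]
  constructor <;> linarith

lemma abs_digamma_add_one_sub_log_le {x : ℝ} (hx : 1 ≤ x) :
    |digamma (x + 1) - log x| ≤ 4 / x := by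
  set n := ⌊x⌋₊
  have hn : n ≠ 0 := (Nat.floor_pos.2 hx).ne'
  have hn0 : (0 : ℝ) < n := by positivity
  have hnx : (n : ℝ) ≤ x := Nat.floor_le (by linarith)
  have hxn : x < n + 1 := Nat.lt_floor_add_one x
  have hψlow : log n < digamma (x + 1) :=
    (digamma_nat_add_one_mem_Ioo hn).1.trans_le (digamma_le_digamma (by positivity) (by linarith))
  have hψupp : digamma (x + 1) < log (n + 2) := by
    have := (digamma_nat_add_one_mem_Ioo (Nat.succ_ne_zero n)).2
    push_cast at this
    rw [show (n : ℝ) + 1 + 1 = n + 2 by ring] at this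
    exact (digamma_le_digamma (by linarith) (by linarith)).trans_lt this
  have hlog_low : log n ≤ log x := log_le_log hn0 hnx
  have hlog_upp : log x ≤ log (n + 2) := log_le_log (by linarith) (by linarith)
  have hgap : log (n + 2) - log n ≤ 2 / n := by
    rw [← log_div (by positivity) hn0.ne']
    have := log_le_sub_one_of_pos (show (0 : ℝ) < (n + 2) / n by positivity)
    linarith [show ((n : ℝ) + 2) / n - 1 = 2 / n by field_simp; ring]
  have hnx' : 2 / (n : ℝ) ≤ 4 / x := by
    rw [div_le_div_iff₀ hn0 (by linarith)]
    have : (1 : ℝ) ≤ n := by exact_mod_cast Nat.one_le_iff_ne_zero.2 hn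
    linarith
  rw [abs_sub_le_iff]
  constructor <;> linarith

lemma digamma_add_one_sub_log_isLittleO :
    (fun x => digamma (x + 1) - log x) =o[atTop] fun x => (log x)⁻¹ := by
  have hO : (fun x => digamma (x + 1) - log x) =O[atTop] fun x => x⁻¹ := by
    refine IsBigO.of_bound 4 ?_
    filter_upwards [eventually_ge_atTop 1] with x hx
    rw [norm_eq_abs, norm_of_nonneg (by positivity), ← div_eq_mul_inv]
    exact abs_digamma_add_one_sub_log_le hx
  simpa using hO.trans_isLittleO (inv_isLittleO_inv_log_pow 1)

section Inversion

variable {α : Type*} {l : Filter α} {L P D : α → ℝ}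

/- In both lemmas, the quantity in question is a rational function of `u = 1/L`,
`e = (P - liExpansion L) L³` and `d = (D - L) L` that is continuous at `u = e = d = 0`. -/

lemma isEquivalent_sub_one_div_sub_one (hL : Tendsto L l atTop)
    (hP : (fun a => P a - liExpansion (L a)) =o[l] fun a => (L a ^ 3)⁻¹)
    (hD : (fun a => D a - L a) =o[l] fun a => (L a)⁻¹) :
    (fun a => P a - 1 / (D a - 1)) ~[l] fun a => 1 / L a ^ 3 := by
  set u := fun a => (L a)⁻¹
  set e := fun a => (P a - liExpansion (L a)) / (L a ^ 3)⁻¹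
  set d := fun a => (D a - L a) / (L a)⁻¹
  have hu : Tendsto u l (𝓝 0) := hL.inv_tendsto_atTop
  have he : Tendsto e l (𝓝 0) := hP.tendsto_div_nhds_zero
  have hd : Tendsto d l (𝓝 0) := hD.tendsto_div_nhds_zero
  have hlim : Tendsto (fun a => e a + (d a + 1 + d a * u a - 2 * u a + 2 * d a * u a ^ 2) /
      (1 - u a + d a * u a ^ 2)) l (𝓝 (0 + (0 + 1 + 0 * 0 - 2 * 0 + 2 * 0 * 0 ^ 2) /
        (1 - 0 + 0 * 0 ^ 2))) :=
    he.add (((((hd.add_const 1).add (hd.mul hu)).sub (hu.const_mul 2)).add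
      ((hd.const_mul 2).mul (hu.pow 2))).div ((tendsto_const_nhds.sub hu).add (hd.mul (hu.pow 2)))
      (by norm_num))
  norm_num at hlim
  rw [isEquivalent_iff_tendsto_one ((hL.eventually_gt_atTop 0).mono fun a ha => by positivity)]
  refine hlim.congr' ?_
  filter_upwards [hL.eventually_gt_atTop 2,
    (hD.trans_tendsto hu).eventually (Ioo_mem_nhds neg_one_lt_zero one_pos)] with a hL2 hDL
  have hL0 : L a ≠ 0 := by positivity
  have hD1 : D a - 1 ≠ 0 := by linarith [hDL.1]
  have hden : 1 - u a + d a * u a ^ 2 = (D a - 1) / L a := by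
    simp only [u, d]
    field_simp
    ring
  rw [hden]
  simp only [u, e, d, liExpansion, Pi.div_apply]
  field_simp
  ring

lemma tendsto_sub_one_div (hL : Tendsto L l atTop)
    (hP : (fun a => P a - liExpansion (L a)) =o[l] fun a => (L a ^ 3)⁻¹)
    (hD : (fun a => D a - L a) =o[l] fun a => (L a)⁻¹) :
    Tendsto (fun a => D a - 1 / P a) l (𝓝 1) := by
  set u := fun a => (L a)⁻¹
  set e := fun a => (P a - liExpansion (L a)) / (L a ^ 3)⁻¹
  have hu : Tendsto u l (𝓝 0) := hL.inv_tendsto_atTop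
  have he : Tendsto e l (𝓝 0) := hP.tendsto_div_nhds_zero
  have hPL : Tendsto (fun a => 1 + u a + 2 * u a ^ 2 + e a * u a ^ 2) l (𝓝 1) := by
    simpa using ((tendsto_const_nhds.add hu).add ((hu.pow 2).const_mul 2)).add (he.mul (hu.pow 2))
  have hlim : Tendsto (fun a => (D a - L a) + (1 + 2 * u a + e a * u a) /
      (1 + u a + 2 * u a ^ 2 + e a * u a ^ 2)) l (𝓝 (0 + (1 + 2 * 0 + 0 * 0) / 1)) :=
    (hD.trans_tendsto hu).add ((((tendsto_const_nhds.add (hu.const_mul 2)).add (he.mul hu))).div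
      hPL one_ne_zero)
  norm_num at hlim
  refine hlim.congr' ?_
  filter_upwards [hL.eventually_gt_atTop 0, hPL.eventually (eventually_ne_nhds one_ne_zero)]
    with a hL0 hPL0
  have hPL_eq : 1 + u a + 2 * u a ^ 2 + e a * u a ^ 2 = P a * L a := by
    simp only [u, e, liExpansion]
    field_simp
    ring
  rw [hPL_eq] at hPL0 ⊢
  have hP0 : P a ≠ 0 := left_ne_zero_of_mul hPL0
  simp only [u, e, liExpansion]
  field_simp
  ring

end Inversion

theorem prime_density_harmonic_asymptotics_general
    (herr : ∀ t : ℝ, 0 < t →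
      (fun x : ℝ => (Nat.primeCounting ⌊x⌋₊ : ℝ) / x - li x / x)
        =o[atTop] (fun x : ℝ => 1 / (Real.log x) ^ t)) :
    (fun x : ℝ => (Nat.primeCounting ⌊x⌋₊ : ℝ) / x
        - 1 / (harmonicInterp x - (1 + Real.eulerMascheroniConstant)))
      ~[atTop] (fun x : ℝ => 1 / (Real.log x) ^ (3 : ℕ)) ∧
    Tendsto (fun x : ℝ => harmonicInterp x - x / (Nat.primeCounting ⌊x⌋₊ : ℝ))
      atTop (𝓝 (1 + Real.eulerMascheroniConstant)) := by
  set P := fun x : ℝ => (Nat.primeCounting ⌊x⌋₊ : ℝ) / x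
  have hP : (fun x => P x - liExpansion (log x)) =o[atTop] fun x => (log x ^ 3)⁻¹ := by
    have herr3 := herr 3 three_pos
    simp only [one_div, rpow_ofNat] at herr3
    exact (herr3.add li_div_sub_liExpansion_isLittleO).congr_left fun x => by ring
  have hH : ∀ x, harmonicInterp x = digamma (x + 1) + eulerMascheroniConstant := fun _ => rfl
  constructor
  · refine (isEquivalent_sub_one_div_sub_one tendsto_log_atTop hP
      digamma_add_one_sub_log_isLittleO).congr_left (Eventually.of_forall fun x => ?_)
    simp only [hH]
    ring
  · have hlim := (tendsto_sub_one_div tendsto_log_atTop hP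
      digamma_add_one_sub_log_isLittleO).const_add eulerMascheroniConstant
    rw [add_comm] at hlim
    refine hlim.congr fun x => ?_
    simp only [hH, P, one_div_div]
    ring

theorem prime_density_harmonic_asymptotics
    (hpnt : Tendsto (fun x : ℝ => (Nat.primeCounting ⌊x⌋₊ : ℝ) * Real.log x / x)
      atTop (𝓝 1))
    (herr : ∀ t : ℝ, 0 < t →
      (fun x : ℝ => (Nat.primeCounting ⌊x⌋₊ : ℝ) / x - li x / x)
        =o[atTop] (fun x : ℝ => 1 / (Real.log x) ^ t)) :
    (fun x : ℝ => (Nat.primeCounting ⌊x⌋₊ : ℝ) / x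
        - 1 / (harmonicInterp x - (1 + Real.eulerMascheroniConstant)))
      ~[atTop] (fun x : ℝ => 1 / (Real.log x) ^ (3 : ℕ)) ∧
    Tendsto (fun x : ℝ => harmonicInterp x - x / (Nat.primeCounting ⌊x⌋₊ : ℝ))
      atTop (𝓝 (1 + Real.eulerMascheroniConstant)) :=
  prime_density_harmonic_asymptotics_general herr
end
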